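/- Let W be a topological space and f, g : W → ℂ holomorphic (or just continuous) functions with no common zero. Then there exist continuous functions h, k : W → ℂ such that f·k − g·h = 1 on W; equivalently, the matrix with columns (f,g)ᵀ and (h,k)ᵀ takes values in SL₂(ℂ). (For W a Stein manifold, h and k can be chosen holomorphic by Cartan's Theorem B.) -/

import Mathlib

/-- If `f, g : W → ℂ` are continuous functions with no common zero, then there are
continuous `h, k : W → ℂ` with `f·k − g·h = 1` on `W`; i.e. the matrix with columns
`(f,g)ᵀ` and `(h,k)ᵀ` takes values in `SL₂(ℂ)`. -/
theorem continuous_unimodular_row_completable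
    (W : Type*) [TopologicalSpace W] (f g : C(W, ℂ))
    (hfg : ∀ w : W, f w ≠ 0 ∨ g w ≠ 0) :
    ∃ h k : C(W, ℂ), ∀ w : W, f w * k w - g w * h w = 1 := by
  have hd : ∀ w : W, ((Complex.normSq (f w) + Complex.normSq (g w) : ℝ) : ℂ) ≠ 0 := by
    intro w
    have : (0 : ℝ) < Complex.normSq (f w) + Complex.normSq (g w) := by
      rcases hfg w with h | h
      · exact add_pos_of_pos_of_nonneg (Complex.normSq_pos.mpr h) (Complex.normSq_nonneg _)
      · exact add_pos_of_nonneg_of_pos (Complex.normSq_nonneg _) (Complex.normSq_pos.mpr h)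
    exact_mod_cast this.ne'
  have hcont : Continuous fun w : W =>
      ((Complex.normSq (f w) + Complex.normSq (g w) : ℝ) : ℂ) := by
    exact Complex.continuous_ofReal.comp
      ((Complex.continuous_normSq.comp f.continuous).add
        (Complex.continuous_normSq.comp g.continuous))
  refine ⟨⟨fun w => -(starRingEnd ℂ) (g w) /
      ((Complex.normSq (f w) + Complex.normSq (g w) : ℝ) : ℂ), ?_⟩,
    ⟨fun w => (starRingEnd ℂ) (f w) /
      ((Complex.normSq (f w) + Complex.normSq (g w) : ℝ) : ℂ), ?_⟩, ?_⟩
  · exact ((Complex.continuous_conj.comp g.continuous).neg).div hcont hd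
  · exact (Complex.continuous_conj.comp f.continuous).div hcont hd
  · intro w
    simp only [ContinuousMap.coe_mk]
    field_simp
    rw [Complex.mul_conj, Complex.mul_conj]
    rw [sub_neg_eq_add, ← Complex.ofReal_add, div_self (hd w)]
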